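/- arXiv:2404.11092 — 2 statements merged into one kernel-verified Lean document; each statement's English description precedes it below -/
import Mathlib

section
/- For every x ∈ ℝ^q, the function s ↦ (1 − cos⟨s, x⟩) w_*(s) is Lebesgue integrable on ℝ^q and ∫_{ℝ^q} (1 − cos⟨s, x⟩) w_*(s) ds = ‖x‖. -/
/-!
Gaussian subordination. With `k = (1 + q) / 2`, the Gamma integral gives
`Γ(k) ‖s‖^(-(1 + q)) = ∫₀^∞ t^(k - 1) e^(-t ‖s‖²) dt`, so `w_*` is `π^(-k)` times a superposition
of Gaussians. By Tonelli the `s`-integral can be done first, and the Fourier transform of the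
Gaussian gives `∫ (1 - cos⟨s, x⟩) e^(-t ‖s‖²) ds = (π / t)^(q / 2) (1 - e^(-‖x‖² / (4 t)))`.
What is left is `π^(-1/2) ∫₀^∞ t^(-1/2) (1 - e^(-‖x‖² / (4 t))) dt`; after `u = 1 / t` this is an
integration by parts against a Gamma integral, and equals `‖x‖`.
-/

open MeasureTheory

/-- The non-integrable weighting function `w_*(s) = 1 / (c_q ‖s‖^{1+q})` on `ℝ^q`, with
`c_q = π^{(1+q)/2} / Γ((1+q)/2)`. -/
noncomputable def wstar (q : ℕ) (s : EuclideanSpace ℝ (Fin q)) : ℝ :=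
  1 / ((Real.pi ^ ((1 + (q : ℝ)) / 2) / Real.Gamma ((1 + (q : ℝ)) / 2)) * ‖s‖ ^ (1 + q))

open Real Set Filter Asymptotics
open scoped Topology RealInnerProductSpace

lemma integrable_and_integral_eq_of_lintegral_ofReal_eq {α : Type*} [MeasurableSpace α]
    {μ : Measure α} {f : α → ℝ} {c : ℝ} (hf : AEStronglyMeasurable f μ) (hf0 : 0 ≤ᵐ[μ] f)
    (hc : 0 ≤ c) (h : ∫⁻ a, ENNReal.ofReal (f a) ∂μ = ENNReal.ofReal c) :
    Integrable f μ ∧ ∫ a, f a ∂μ = c :=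
  ⟨⟨hf, (hasFiniteIntegral_iff_ofReal hf0).2 (h ▸ ENNReal.ofReal_lt_top)⟩, by
    rw [integral_eq_lintegral_of_nonneg_ae hf0 hf, h, ENNReal.toReal_ofReal hc]⟩

lemma one_sub_exp_neg_le (y : ℝ) : 1 - exp (-y) ≤ y := by
  linarith [add_one_le_exp (-y)]

lemma one_sub_exp_neg_nonneg {y : ℝ} (hy : 0 ≤ y) : 0 ≤ 1 - exp (-y) :=
  sub_nonneg.2 (exp_le_one_iff.2 (neg_nonpos.2 hy))

section OneDimensional

variable {θ a : ℝ}

lemma integrableOn_rpow_mul_one_sub_exp_neg_mul (hθ0 : 0 < θ) (hθ1 : θ < 1) (ha : 0 ≤ a) :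
    IntegrableOn (fun u : ℝ => u ^ (-θ - 1) * (1 - exp (-(a * u)))) (Ioi 0) := by
  have hloc : LocallyIntegrableOn (fun u : ℝ => 1 - exp (-(a * u))) (Ioi 0) :=
    (by fun_prop : Continuous fun u : ℝ => 1 - exp (-(a * u))).locallyIntegrable
      |>.locallyIntegrableOn _
  refine mellin_convergent_of_isBigO_scalar (a := 0) (b := -1) hloc ?_ (by linarith) ?_
    (by linarith)
  · refine IsBigO.of_bound 1 ?_
    filter_upwards [eventually_ge_atTop 0] with u hu
    rw [neg_zero, rpow_zero, norm_one, one_mul,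
      norm_of_nonneg (one_sub_exp_neg_nonneg (by positivity))]
    linarith [exp_pos (-(a * u))]
  · refine IsBigO.of_bound a ?_
    filter_upwards [self_mem_nhdsWithin] with u (hu : 0 < u)
    rw [neg_neg, rpow_one, norm_of_nonneg (one_sub_exp_neg_nonneg (by positivity)),
      norm_of_nonneg hu.le]
    exact one_sub_exp_neg_le _

lemma tendsto_rpow_mul_one_sub_exp_neg_mul_nhdsGT_zero (hθ1 : θ < 1) (ha : 0 ≤ a) :
    Tendsto (fun u : ℝ => u ^ (-θ) * (1 - exp (-(a * u)))) (𝓝[>] 0) (𝓝 0) := by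
  have hmaj : Tendsto (fun u : ℝ => a * u ^ (1 - θ)) (𝓝[>] 0) (𝓝 0) := by
    have := (continuousAt_rpow_const 0 (1 - θ) (Or.inr (by linarith))).tendsto.const_mul a
    rw [zero_rpow (by linarith), mul_zero] at this
    exact tendsto_nhdsWithin_of_tendsto_nhds this
  refine squeeze_zero_norm' (eventually_nhdsWithin_of_forall fun u (hu : 0 < u) => ?_) hmaj
  rw [norm_of_nonneg (mul_nonneg (by positivity) (one_sub_exp_neg_nonneg (by positivity))),
    rpow_sub hu, rpow_one, div_eq_mul_inv, ← rpow_neg hu.le]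
  nlinarith [one_sub_exp_neg_le (a * u), rpow_pos_of_pos hu (-θ)]

lemma tendsto_rpow_mul_one_sub_exp_neg_mul_atTop (hθ0 : 0 < θ) (ha : 0 ≤ a) :
    Tendsto (fun u : ℝ => u ^ (-θ) * (1 - exp (-(a * u)))) atTop (𝓝 0) := by
  refine squeeze_zero_norm' ((eventually_gt_atTop 0).mono fun u hu => ?_)
    (tendsto_rpow_neg_atTop hθ0)
  rw [norm_of_nonneg (mul_nonneg (by positivity) (one_sub_exp_neg_nonneg (by positivity)))]
  nlinarith [exp_pos (-(a * u)), rpow_pos_of_pos hu (-θ)]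

lemma hasDerivAt_rpow_mul_one_sub_exp_neg_mul {u : ℝ} (hu : 0 < u) :
    HasDerivAt (fun u : ℝ => u ^ (-θ) * (1 - exp (-(a * u))))
      (a * (u ^ (-θ) * exp (-(a * u))) - θ * (u ^ (-θ - 1) * (1 - exp (-(a * u))))) u := by
  have hpow : HasDerivAt (fun u : ℝ => u ^ (-θ)) (-θ * u ^ (-θ - 1)) u :=
    hasDerivAt_rpow_const (Or.inl hu.ne')
  have hexp : HasDerivAt (fun u : ℝ => 1 - exp (-(a * u))) (exp (-(a * u)) * a) u := by
    simpa using (((hasDerivAt_id u).const_mul a).neg.exp).const_sub 1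
  exact (hpow.mul hexp).congr_deriv (by ring)

lemma integral_rpow_mul_one_sub_exp_neg_mul (hθ0 : 0 < θ) (hθ1 : θ < 1) (ha : 0 ≤ a) :
    ∫ u in Ioi 0, u ^ (-θ - 1) * (1 - exp (-(a * u))) = a ^ θ * Gamma (1 - θ) / θ := by
  rcases ha.eq_or_lt with rfl | ha
  · simp [zero_rpow hθ0.ne']
  have hint := integrableOn_rpow_mul_one_sub_exp_neg_mul hθ0 hθ1 ha.le
  have hgamma_int : IntegrableOn (fun u : ℝ => u ^ (-θ) * exp (-(a * u))) (Ioi 0) := by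
    simpa only [rpow_one, neg_mul] using
      integrableOn_rpow_mul_exp_neg_mul_rpow (by linarith) zero_lt_one ha
  have hgamma := integral_rpow_mul_exp_neg_mul_Ioi (sub_pos.2 hθ1) ha
  rw [sub_sub_cancel_left] at hgamma
  have hparts := integral_Ioi_of_hasDerivAt_of_tendsto
    (continuousWithinAt_Ioi_iff_Ici.1 (by
      simpa [ContinuousWithinAt] using tendsto_rpow_mul_one_sub_exp_neg_mul_nhdsGT_zero hθ1 ha.le))
    (fun u hu => hasDerivAt_rpow_mul_one_sub_exp_neg_mul hu)
    ((hgamma_int.const_mul a).sub (hint.const_mul θ))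
    (tendsto_rpow_mul_one_sub_exp_neg_mul_atTop hθ0 ha.le)
  rw [integral_sub (hgamma_int.const_mul a) (hint.const_mul θ), integral_const_mul,
    integral_const_mul, hgamma] at hparts
  simp only [mul_zero, neg_zero, exp_zero, sub_self] at hparts
  rw [one_div, inv_rpow ha.le, rpow_sub ha, rpow_one, inv_div, ← mul_assoc,
    mul_div_cancel₀ _ ha.ne'] at hparts
  field_simp
  linarith

lemma rpow_mul_one_sub_exp_neg_div_comp_inv {u : ℝ} (hu : 0 < u) :
    (|(-1 : ℝ)| * u ^ ((-1 : ℝ) - 1)) • ((u ^ (-1 : ℝ)) ^ (θ - 1) * (1 - exp (-(a / u ^ (-1 : ℝ)))))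
      = u ^ (-θ - 1) * (1 - exp (-(a * u))) := by
  rw [smul_eq_mul, ← rpow_mul hu.le, rpow_neg_one, div_inv_eq_mul, abs_neg, abs_one, one_mul,
    ← mul_assoc, ← rpow_add hu]
  ring_nf

lemma integrableOn_rpow_mul_one_sub_exp_neg_div (hθ0 : 0 < θ) (hθ1 : θ < 1) (ha : 0 ≤ a) :
    IntegrableOn (fun t : ℝ => t ^ (θ - 1) * (1 - exp (-(a / t)))) (Ioi 0) := by
  rw [← integrableOn_Ioi_comp_rpow_iff _ (p := -1) (by norm_num)]
  exact (integrableOn_rpow_mul_one_sub_exp_neg_mul hθ0 hθ1 ha).congr_fun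
    (fun u hu => (rpow_mul_one_sub_exp_neg_div_comp_inv hu).symm) measurableSet_Ioi

lemma integral_rpow_mul_one_sub_exp_neg_div (hθ0 : 0 < θ) (hθ1 : θ < 1) (ha : 0 ≤ a) :
    ∫ t in Ioi 0, t ^ (θ - 1) * (1 - exp (-(a / t))) = a ^ θ * Gamma (1 - θ) / θ := by
  rw [← integral_comp_rpow_Ioi _ (p := -1) (by norm_num),
    ← integral_rpow_mul_one_sub_exp_neg_mul hθ0 hθ1 ha]
  exact setIntegral_congr_fun measurableSet_Ioi
    (fun u hu => rpow_mul_one_sub_exp_neg_div_comp_inv hu)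

end OneDimensional

section Gaussian

variable {V : Type*} [NormedAddCommGroup V] [InnerProductSpace ℝ V] [FiniteDimensional ℝ V]
  [MeasurableSpace V] [BorelSpace V] {t : ℝ}

lemma integrable_exp_neg_mul_sq_norm (ht : 0 < t) :
    Integrable fun s : V => exp (-t * ‖s‖ ^ 2) := by
  refine (GaussianFourier.integrable_cexp_neg_mul_sq_norm_add (b := t) (by simpa) 0 (0 : V)).norm
    |>.congr (.of_forall fun s => ?_)
  simp [Complex.norm_exp, ← Complex.ofReal_pow]

lemma integral_cos_inner_mul_exp_neg_mul_sq_norm (ht : 0 < t) (x : V) :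
    ∫ s : V, cos ⟪s, x⟫ * exp (-t * ‖s‖ ^ 2)
      = (π / t) ^ (Module.finrank ℝ V / 2 : ℝ) * exp (-‖x‖ ^ 2 / (4 * t)) := by
  have hb : 0 < (t : ℂ).re := by simpa
  have hfourier : ∫ s : V, Complex.exp (-t * ‖s‖ ^ 2 + Complex.I * ⟪x, s⟫)
      = ((π / t) ^ (Module.finrank ℝ V / 2 : ℝ) * exp (-‖x‖ ^ 2 / (4 * t)) : ℝ) := by
    rw [GaussianFourier.integral_cexp_neg_mul_sq_norm_add hb, Complex.ofReal_mul,
      Complex.ofReal_cpow (by positivity), Complex.ofReal_exp]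
    push_cast
    rw [Complex.I_sq]
    ring_nf
  calc ∫ s : V, cos ⟪s, x⟫ * exp (-t * ‖s‖ ^ 2)
      = ∫ s : V, (Complex.exp (-t * ‖s‖ ^ 2 + Complex.I * ⟪x, s⟫)).re := by
        refine integral_congr_ae (.of_forall fun s => ?_)
        dsimp only
        simp [Complex.exp_re, ← Complex.ofReal_pow, real_inner_comm, mul_comm]
    _ = _ := by
      rw [← RCLike.re_eq_complex_re, integral_re
        (GaussianFourier.integrable_cexp_neg_mul_sq_norm_add hb _ x), hfourier]
      rfl

lemma lintegral_one_sub_cos_inner_mul_exp_neg_mul_sq_norm (ht : 0 < t) (x : V) :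
    ∫⁻ s : V, ENNReal.ofReal ((1 - cos ⟪s, x⟫) * exp (-t * ‖s‖ ^ 2))
      = ENNReal.ofReal
          ((π / t) ^ (Module.finrank ℝ V / 2 : ℝ) * (1 - exp (-‖x‖ ^ 2 / (4 * t)))) := by
  have hexp := integrable_exp_neg_mul_sq_norm (V := V) ht
  have hcos : Integrable fun s : V => cos ⟪s, x⟫ * exp (-t * ‖s‖ ^ 2) :=
    hexp.bdd_mul (c := 1) (by fun_prop) (.of_forall fun s => abs_cos_le_one _)
  have hdiff : Integrable fun s : V => exp (-t * ‖s‖ ^ 2) - cos ⟪s, x⟫ * exp (-t * ‖s‖ ^ 2) :=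
    hexp.sub hcos
  simp_rw [sub_mul, one_mul]
  rw [← ofReal_integral_eq_lintegral_ofReal hdiff (.of_forall fun s => ?_),
    integral_sub hexp hcos, GaussianFourier.integral_rexp_neg_mul_sq_norm ht,
    integral_cos_inner_mul_exp_neg_mul_sq_norm ht, mul_one_sub]
  exact sub_nonneg.2 (mul_le_of_le_one_left (exp_pos _).le (cos_le_one _))

end Gaussian

section Wstar

variable {q : ℕ}

lemma measurable_wstar : Measurable (wstar q) := by
  unfold wstar
  fun_prop

lemma wstar_nonneg (s : EuclideanSpace ℝ (Fin q)) : 0 ≤ wstar q s := by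
  unfold wstar
  positivity

lemma wstar_eq_integral {s : EuclideanSpace ℝ (Fin q)} (hs : s ≠ 0) :
    wstar q s = (π ^ ((1 + q : ℝ) / 2))⁻¹ *
      ∫ t in Ioi 0, t ^ ((1 + q : ℝ) / 2 - 1) * exp (-t * ‖s‖ ^ 2) := by
  have hk : 0 < (1 + q : ℝ) / 2 := by positivity
  have hs2 : 0 < ‖s‖ ^ 2 := by positivity
  have hpow : (1 / ‖s‖ ^ 2) ^ ((1 + q : ℝ) / 2) = (‖s‖ ^ (1 + q))⁻¹ := by
    rw [one_div, inv_rpow hs2.le, ← rpow_natCast, ← rpow_natCast, ← rpow_mul (norm_nonneg s)]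
    push_cast
    ring_nf
  have hgamma := integral_rpow_mul_exp_neg_mul_Ioi hk hs2
  simp_rw [mul_comm (‖s‖ ^ 2), ← neg_mul] at hgamma
  rw [wstar, hgamma, hpow]
  have hΓ := (Gamma_pos_of_pos hk).ne'
  field_simp

lemma ofReal_one_sub_cos_mul_wstar_eq_lintegral (x s : EuclideanSpace ℝ (Fin q)) :
    ENNReal.ofReal ((1 - cos ⟪s, x⟫) * wstar q s) = ENNReal.ofReal (π ^ ((1 + q : ℝ) / 2))⁻¹ *
      ∫⁻ t in Ioi 0,
        ENNReal.ofReal (t ^ ((1 + q : ℝ) / 2 - 1) * ((1 - cos ⟪s, x⟫) * exp (-t * ‖s‖ ^ 2))) := by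
  rcases eq_or_ne s 0 with rfl | hs
  · simp
  have hint : IntegrableOn
      (fun t : ℝ => t ^ ((1 + q : ℝ) / 2 - 1) * exp (-t * ‖s‖ ^ 2)) (Ioi 0) := by
    simpa only [rpow_one, neg_mul, mul_comm (‖s‖ ^ 2)] using
      integrableOn_rpow_mul_exp_neg_mul_rpow (s := (1 + q : ℝ) / 2 - 1)
        (by linarith [(q.cast_nonneg : (0 : ℝ) ≤ q)]) zero_lt_one (by positivity : 0 < ‖s‖ ^ 2)
  have hcos : 0 ≤ 1 - cos ⟪s, x⟫ := sub_nonneg.2 (cos_le_one _)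
  rw [wstar_eq_integral hs, mul_left_comm, ← integral_const_mul, ENNReal.ofReal_mul (by positivity),
    ofReal_integral_eq_lintegral_ofReal (hint.const_mul _)]
  · simp_rw [mul_left_comm (1 - cos ⟪s, x⟫)]
  · filter_upwards [ae_restrict_mem measurableSet_Ioi] with t (ht : 0 < t)
    positivity

lemma lintegral_one_sub_cos_mul_wstar (x : EuclideanSpace ℝ (Fin q)) :
    ∫⁻ s, ENNReal.ofReal ((1 - cos ⟪s, x⟫) * wstar q s) = ENNReal.ofReal ‖x‖ := by
  set k : ℝ := (1 + q : ℝ) / 2 with hk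
  set g : EuclideanSpace ℝ (Fin q) → ℝ → ENNReal := fun s t =>
    ENNReal.ofReal (t ^ (k - 1) * ((1 - cos ⟪s, x⟫) * exp (-t * ‖s‖ ^ 2)))
  set K : ℝ → ℝ := fun t => t ^ ((1 / 2 : ℝ) - 1) * (1 - exp (-(‖x‖ ^ 2 / 4 / t))) with hK
  have hg : Measurable (Function.uncurry g) := by fun_prop
  have hgauss : ∀ t > 0, ∫⁻ s, g s t = ENNReal.ofReal (π ^ (q / 2 : ℝ) * K t) := by
    intro t ht
    simp only [g, ENNReal.ofReal_mul (rpow_nonneg ht.le _)]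
    rw [lintegral_const_mul' _ _ ENNReal.ofReal_ne_top,
      lintegral_one_sub_cos_inner_mul_exp_neg_mul_sq_norm ht, finrank_euclideanSpace_fin,
      ← ENNReal.ofReal_mul (rpow_nonneg ht.le _)]
    congr 1
    simp only [hK]
    rw [div_rpow pi_pos.le ht.le, rpow_sub ht, rpow_sub ht, hk, add_div, rpow_add ht,
      show -‖x‖ ^ 2 / (4 * t) = -(‖x‖ ^ 2 / 4 / t) by ring]
    field_simp
  have hK_int : IntegrableOn K (Ioi 0) :=
    integrableOn_rpow_mul_one_sub_exp_neg_div (by norm_num) (by norm_num) (by positivity)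
  have hK_nonneg : 0 ≤ᵐ[volume.restrict (Ioi 0)] fun t => π ^ (q / 2 : ℝ) * K t := by
    filter_upwards [ae_restrict_mem measurableSet_Ioi] with t (ht : 0 < t)
    exact mul_nonneg (by positivity)
      (mul_nonneg (by positivity) (one_sub_exp_neg_nonneg (by positivity)))
  calc ∫⁻ s, ENNReal.ofReal ((1 - cos ⟪s, x⟫) * wstar q s)
      = ENNReal.ofReal (π ^ k)⁻¹ * ∫⁻ s, ∫⁻ t in Ioi 0, g s t := by
        simp_rw [ofReal_one_sub_cos_mul_wstar_eq_lintegral]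
        exact lintegral_const_mul _ hg.lintegral_prod_right'
    _ = ENNReal.ofReal (π ^ k)⁻¹ * ∫⁻ t in Ioi 0, ∫⁻ s, g s t := by
        rw [lintegral_lintegral_swap hg.aemeasurable]
    _ = ENNReal.ofReal (π ^ k)⁻¹ * ENNReal.ofReal (π ^ (q / 2 : ℝ) * ∫ t in Ioi 0, K t) := by
        rw [setLIntegral_congr_fun measurableSet_Ioi hgauss, ← integral_const_mul,
          ofReal_integral_eq_lintegral_ofReal (hK_int.const_mul _) hK_nonneg]
    _ = ENNReal.ofReal ‖x‖ := by
        simp only [hK]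
        rw [integral_rpow_mul_one_sub_exp_neg_div (by norm_num) (by norm_num) (by positivity),
          ← ENNReal.ofReal_mul (by positivity)]
        congr 1
        rw [show (1 : ℝ) - 1 / 2 = 1 / 2 by norm_num, Gamma_one_half_eq, ← sqrt_eq_rpow,
          show ‖x‖ ^ 2 / 4 = (‖x‖ / 2) ^ 2 by ring, sqrt_sq (by positivity), sqrt_eq_rpow, hk,
          add_div, add_comm, rpow_add pi_pos]
        field_simp

end Wstar

/-- For every `x ∈ ℝ^q`, the function `s ↦ (1 − cos⟨s, x⟩) w_*(s)` is Lebesgue integrable on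
`ℝ^q` and `∫_{ℝ^q} (1 − cos⟨s, x⟩) w_*(s) ds = ‖x‖`. -/
theorem statement0 (q : ℕ) (x : EuclideanSpace ℝ (Fin q)) :
    Integrable (fun s : EuclideanSpace ℝ (Fin q) =>
      (1 - Real.cos (inner ℝ s x)) * wstar q s) volume ∧
    (∫ s : EuclideanSpace ℝ (Fin q), (1 - Real.cos (inner ℝ s x)) * wstar q s) = ‖x‖ :=
  integrable_and_integral_eq_of_lintegral_ofReal_eq
    ((by fun_prop : Continuous fun s : EuclideanSpace ℝ (Fin q) => 1 - cos ⟪s, x⟫).measurable.mul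
      measurable_wstar).aestronglyMeasurable
    (.of_forall fun s => mul_nonneg (sub_nonneg.2 (cos_le_one _)) (wstar_nonneg s))
    (norm_nonneg x) (lintegral_one_sub_cos_mul_wstar x)
end

section
/- (Closed-form MDD estimator for the multiple linear model.) Fix n ≥ 1 and data z_{1,1}, …, z_{1,n} ∈ ℝ^l and z_{2,1}, …, z_{2,n} ∈ ℝ^{k−l}. For θ ∈ ℝ^{l(k−l)} identified with Γ ∈ ℝ^{l × (k−l)} via θ = vec(Γ), define MDD_n(θ) = −n^{−2} ∑_{t=1}^n ∑_{t'=1}^n (r_t(θ) − r̄(θ))ᵀ (r_{t'}(θ) − r̄(θ)) ‖z_{2,t} − z_{2,t'}‖ with r_t(θ) = z_{1,t} − Γ z_{2,t} and r̄(θ) = n^{−1} ∑_t r_t(θ). Let Ξ_{1n} = ∑_{t,t'} [I_l ⊗ z_{2,t}ᵀ − n^{−1} ∑_r (I_l ⊗ z_{2,r}ᵀ)]ᵀ [I_l ⊗ z_{2,t'}ᵀ − n^{−1} ∑_r (I_l ⊗ z_{2,r}ᵀ)] ‖z_{2,t} − z_{2,t'}‖ and Ξ_{2n} = ∑_{t,t'}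 [I_l ⊗ z_{2,t}ᵀ − n^{−1} ∑_r (I_l ⊗ z_{2,r}ᵀ)]ᵀ (z_{1,t'} − n^{−1} ∑_r z_{1,r}) ‖z_{2,t} − z_{2,t'}‖. If Ξ_{1n} is invertible, then θ̂ = Ξ_{1n}^{−1} Ξ_{2n} is a minimizer of MDD_n over ℝ^{l(k−l)}; moreover MDD_n is a convex quadratic function of θ and every minimizer satisfies Ξ_{1n} θ = Ξ_{2n}. -/
/-!
Each residual `r_t(θ)` is affine in `θ`, so `MDD_n` is a quadratic function of `θ` with quadratic
part `-n⁻² θᵀ Ξ_{1n} θ` and linear part `2 n⁻² Ξ_{2n}ᵀ θ`; its minimizers are therefore exactly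
the solutions of the normal equations `Ξ_{1n} θ = Ξ_{2n}` as soon as `-Ξ_{1n}` is positive
semidefinite. Since the centered matrices sum to zero, this reduces to the conditional negative
definiteness of the Euclidean distance: `∑ c_t c_{t'} ‖x_t - x_{t'}‖ ≤ 0` whenever `∑ c_t = 0`.
On the line this follows from `|a - b| = ∫ (1_{s ≤ a} - 1_{s ≤ b})² ds`, and in higher dimension
from averaging the one-dimensional inequality over projections: `∫_{‖u‖ ≤ 1} |⟪v, u⟫| du` is
proportional to `‖v‖` by rotation invariance.
-/

open Matrix

/-- `I_l ⊗ z_{2,t}ᵀ`, viewed as the `l × (l·(k−l))` matrix with entries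
`(i, (j, c)) ↦ δ_{ij} (z_{2,t})_c`, so that `Γ z_{2,t} = (I_l ⊗ z_{2,t}ᵀ) vec(Γ)` with
`vec(Γ) (j, c) = Γ_{jc}`. -/
noncomputable def Wmat (k l n : ℕ) (z2 : Fin n → EuclideanSpace ℝ (Fin (k - l)))
    (t : Fin n) : Matrix (Fin l) (Fin l × Fin (k - l)) ℝ :=
  Matrix.of fun i jc => if jc.1 = i then z2 t jc.2 else 0

/-- The centered matrix `I_l ⊗ z_{2,t}ᵀ − n^{-1} ∑_r (I_l ⊗ z_{2,r}ᵀ)`. -/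
noncomputable def Wc (k l n : ℕ) (z2 : Fin n → EuclideanSpace ℝ (Fin (k - l)))
    (t : Fin n) : Matrix (Fin l) (Fin l × Fin (k - l)) ℝ :=
  Wmat k l n z2 t - (n : ℝ)⁻¹ • ∑ r, Wmat k l n z2 r

/-- `Ξ_{1n} = ∑_{t,t'} [I_l ⊗ z_{2,t}ᵀ − n^{-1}∑_r (I_l ⊗ z_{2,r}ᵀ)]ᵀ
[I_l ⊗ z_{2,t'}ᵀ − n^{-1}∑_r (I_l ⊗ z_{2,r}ᵀ)] ‖z_{2,t} − z_{2,t'}‖`. -/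
noncomputable def Xi1 (k l n : ℕ) (z2 : Fin n → EuclideanSpace ℝ (Fin (k - l))) :
    Matrix (Fin l × Fin (k - l)) (Fin l × Fin (k - l)) ℝ :=
  ∑ t, ∑ t', ‖z2 t - z2 t'‖ • ((Wc k l n z2 t)ᵀ * Wc k l n z2 t')

/-- `Ξ_{2n} = ∑_{t,t'} [I_l ⊗ z_{2,t}ᵀ − n^{-1}∑_r (I_l ⊗ z_{2,r}ᵀ)]ᵀ
(z_{1,t'} − n^{-1} ∑_r z_{1,r}) ‖z_{2,t} − z_{2,t'}‖`. -/
noncomputable def Xi2 (k l n : ℕ) (z1 : Fin n → EuclideanSpace ℝ (Fin l))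
    (z2 : Fin n → EuclideanSpace ℝ (Fin (k - l))) : (Fin l × Fin (k - l)) → ℝ :=
  ∑ t, ∑ t', ‖z2 t - z2 t'‖ •
    ((Wc k l n z2 t)ᵀ.mulVec fun i => z1 t' i - (n : ℝ)⁻¹ * ∑ r, z1 r i)

/-- The residual `r_t(θ) = z_{1,t} − Γ z_{2,t}`, where `θ = vec(Γ)` via `θ (i, c) = Γ_{ic}`. -/
noncomputable def resid (k l n : ℕ) (z1 : Fin n → EuclideanSpace ℝ (Fin l))
    (z2 : Fin n → EuclideanSpace ℝ (Fin (k - l)))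
    (θ : Fin l × Fin (k - l) → ℝ) (t : Fin n) (i : Fin l) : ℝ :=
  z1 t i - ∑ c, θ (i, c) * z2 t c

/-- The sample criterion
`MDD_n(θ) = −n^{-2} ∑_{t,t'} (r_t(θ) − r̄(θ))ᵀ (r_{t'}(θ) − r̄(θ)) ‖z_{2,t} − z_{2,t'}‖` for
the multiple linear model. -/
noncomputable def MDDlin (k l n : ℕ) (z1 : Fin n → EuclideanSpace ℝ (Fin l))
    (z2 : Fin n → EuclideanSpace ℝ (Fin (k - l)))
    (θ : Fin l × Fin (k - l) → ℝ) : ℝ :=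
  -((n : ℝ) ^ 2)⁻¹ * ∑ t, ∑ t',
    (∑ i, (resid k l n z1 z2 θ t i - (n : ℝ)⁻¹ * ∑ r, resid k l n z1 z2 θ r i) *
      (resid k l n z1 z2 θ t' i - (n : ℝ)⁻¹ * ∑ r, resid k l n z1 z2 θ r i)) *
    ‖z2 t - z2 t'‖

open MeasureTheory Metric RealInnerProductSpace

section ConditionallyNegativeDefinite

variable {ι : Type*} [Fintype ι]

lemma sum_sum_mul_mul_sub_sq (c g : ι → ℝ) (hc : ∑ t, c t = 0) :
    ∑ t, ∑ t', c t * c t' * (g t - g t') ^ 2 = -2 * (∑ t, c t * g t) ^ 2 := by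
  calc ∑ t, ∑ t', c t * c t' * (g t - g t') ^ 2
      = ∑ t, ∑ t', (c t * g t ^ 2 * c t' + c t * (c t' * g t' ^ 2)
          - 2 * (c t * g t) * (c t' * g t')) := by
        congr! 2; ring
    _ = (∑ t, c t * g t ^ 2) * ∑ t, c t + (∑ t, c t) * ∑ t, c t * g t ^ 2
          - 2 * (∑ t, c t * g t) * ∑ t, c t * g t := by
        simp only [Finset.sum_add_distrib, Finset.sum_sub_distrib, ← Finset.mul_sum,
          ← Finset.sum_mul]
    _ = -2 * (∑ t, c t * g t) ^ 2 := by rw [hc]; ring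

lemma sum_sum_mul_mul_integral_nonpos {α : Type*} [MeasurableSpace α] (μ : Measure α)
    (k : ι → ι → α → ℝ) (hk : ∀ t t', Integrable (k t t') μ) (c : ι → ℝ)
    (h : ∀ ω, ∑ t, ∑ t', c t * c t' * k t t' ω ≤ 0) :
    ∑ t, ∑ t', c t * c t' * ∫ ω, k t t' ω ∂μ ≤ 0 := by
  have hk' : ∀ t t', Integrable (fun ω => c t * c t' * k t t' ω) μ :=
    fun t t' => (hk t t').const_mul _
  calc ∑ t, ∑ t', c t * c t' * ∫ ω, k t t' ω ∂μ
      = ∫ ω, ∑ t, ∑ t', c t * c t' * k t t' ω ∂μ := by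
        rw [integral_finsetSum _ fun t _ => integrable_finsetSum _ fun t' _ => hk' t t']
        refine Finset.sum_congr rfl fun t _ => ?_
        rw [integral_finsetSum _ fun t' _ => hk' t t']
        simp only [integral_const_mul]
    _ ≤ 0 := integral_nonpos h

lemma sq_indicator_Iic_sub_indicator_Iic (a b : ℝ) :
    (fun x => ((Set.Iic a).indicator 1 x - (Set.Iic b).indicator 1 x : ℝ) ^ 2)
      = (Set.Ioc (min a b) (max a b)).indicator 1 := by
  ext x
  simp only [Set.indicator_apply, Set.mem_Iic, Set.mem_Ioc, Pi.one_apply, min_lt_iff,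
    le_max_iff]
  split_ifs <;> norm_num <;> grind

lemma sum_sum_mul_mul_abs_sub_nonpos (a c : ι → ℝ) (hc : ∑ t, c t = 0) :
    ∑ t, ∑ t', c t * c t' * |a t - a t'| ≤ 0 := by
  set f : ι → ℝ → ℝ := fun t => (Set.Iic (a t)).indicator 1
  have hsq : ∀ t t', (fun x => (f t x - f t' x) ^ 2)
      = (Set.Ioc (min (a t) (a t')) (max (a t) (a t'))).indicator 1 :=
    fun t t' => sq_indicator_Iic_sub_indicator_Iic _ _
  have habs : ∀ t t', |a t - a t'| = ∫ x, (f t x - f t' x) ^ 2 := by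
    intro t t'
    rw [hsq, integral_indicator_one measurableSet_Ioc, Real.volume_real_Ioc_of_le min_le_max,
      max_sub_min_eq_abs']
  simp_rw [habs]
  refine sum_sum_mul_mul_integral_nonpos _ _ (fun t t' => ?_) c fun x => ?_
  · rw [hsq]
    exact (integrable_indicator_iff measurableSet_Ioc).2 (integrableOn_const measure_Ioc_lt_top.ne)
  · rw [sum_sum_mul_mul_sub_sq c _ hc]
    nlinarith [sq_nonneg (∑ t, c t * f t x)]

variable {E : Type*} [NormedAddCommGroup E] [InnerProductSpace ℝ E] [FiniteDimensional ℝ E]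
  [MeasurableSpace E] [BorelSpace E]

lemma integrableOn_closedBall_abs_inner (v : E) :
    IntegrableOn (fun u => |⟪v, u⟫|) (closedBall 0 1) :=
  (continuous_const.inner continuous_id).abs.continuousOn.integrableOn_compact
    (isCompact_closedBall 0 1)

lemma setIntegral_closedBall_abs_inner_of_norm_eq {v w : E} (h : ‖v‖ = ‖w‖) :
    ∫ u in closedBall 0 1, |⟪v, u⟫| = ∫ u in closedBall 0 1, |⟪w, u⟫| := by
  set R : E ≃ₗᵢ[ℝ] E := (ℝ ∙ (w - v))ᗮ.reflection
  have hR : R w = v := Submodule.reflection_sub h.symm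
  have hball : R.symm ⁻¹' closedBall 0 1 = closedBall 0 1 := by
    ext u; simp
  calc ∫ u in closedBall 0 1, |⟪v, u⟫|
      = ∫ u in R.symm ⁻¹' closedBall 0 1, |⟪w, R.symm u⟫| := by
        rw [hball]
        congr! 3 with u
        rw [← hR, ← R.inner_map_map w (R.symm u), R.apply_symm_apply]
    _ = ∫ u in closedBall 0 1, |⟪w, u⟫| :=
        R.symm.measurePreserving.setIntegral_preimage_emb
          R.symm.toHomeomorph.measurableEmbedding (fun u => |⟪w, u⟫|) _

lemma setIntegral_closedBall_abs_inner_pos {e : E} (he : e ≠ 0) :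
    0 < ∫ u in closedBall 0 1, |⟪e, u⟫| := by
  rw [setIntegral_pos_iff_support_of_nonneg_ae
    (Filter.Eventually.of_forall fun u => abs_nonneg _) (integrableOn_closedBall_abs_inner e)]
  have hopen : IsOpen ({u : E | ⟪e, u⟫ ≠ 0} ∩ ball 0 1) :=
    (isOpen_ne_fun (continuous_const.inner continuous_id) continuous_const).inter isOpen_ball
  have hne : (2 * ‖e‖)⁻¹ • e ∈ {u : E | ⟪e, u⟫ ≠ 0} ∩ ball 0 1 := by
    have : 0 < ‖e‖ := norm_pos_iff.2 he
    refine ⟨?_, ?_⟩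
    · simp [real_inner_smul_right, he]
    · rw [mem_ball_zero_iff, norm_smul, Real.norm_of_nonneg (by positivity)]
      field_simp
      norm_num
  refine (hopen.measure_pos volume ⟨_, hne⟩).trans_le (measure_mono ?_)
  rintro u ⟨hu, hball⟩
  exact ⟨abs_ne_zero.2 hu, ball_subset_closedBall hball⟩

lemma setIntegral_closedBall_abs_inner {e : E} (he : ‖e‖ = 1) (v : E) :
    ∫ u in closedBall 0 1, |⟪v, u⟫| = ‖v‖ * ∫ u in closedBall 0 1, |⟪e, u⟫| := by
  rw [setIntegral_closedBall_abs_inner_of_norm_eq (w := ‖v‖ • e) (by simp [norm_smul, he]),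
    ← integral_const_mul]
  simp [real_inner_smul_left, abs_mul]

lemma sum_sum_mul_mul_norm_sub_nonpos (x : ι → E) (c : ι → ℝ) (hc : ∑ t, c t = 0) :
    ∑ t, ∑ t', c t * c t' * ‖x t - x t'‖ ≤ 0 := by
  rcases subsingleton_or_nontrivial E with hE | hE
  · simp [Subsingleton.elim (x _ - x _) 0]
  obtain ⟨e, he⟩ := exists_norm_eq E zero_le_one
  set κ := ∫ u in closedBall 0 1, |⟪e, u⟫|
  have hκ : 0 < κ := setIntegral_closedBall_abs_inner_pos (by rintro rfl; simp at he)
  have hnorm : ∀ t t', ‖x t - x t'‖ = κ⁻¹ * ∫ u in closedBall 0 1, |⟪x t - x t', u⟫| := by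
    intro t t'
    rw [setIntegral_closedBall_abs_inner he]
    field_simp
    rfl
  have hint : ∑ t, ∑ t', c t * c t' * ∫ u in closedBall 0 1, |⟪x t - x t', u⟫| ≤ 0 :=
    sum_sum_mul_mul_integral_nonpos _ _
      (fun t t' => integrableOn_closedBall_abs_inner (x t - x t')) c fun u => by
        simpa only [inner_sub_left] using sum_sum_mul_mul_abs_sub_nonpos (fun t => ⟪x t, u⟫) c hc
  calc ∑ t, ∑ t', c t * c t' * ‖x t - x t'‖
      = κ⁻¹ * ∑ t, ∑ t', c t * c t' * ∫ u in closedBall 0 1, |⟪x t - x t', u⟫| := by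
        simp_rw [hnorm, Finset.mul_sum]
        exact Finset.sum_congr rfl fun t _ => Finset.sum_congr rfl fun t' _ => by ring
    _ ≤ 0 := mul_nonpos_of_nonneg_of_nonpos (inv_nonneg.2 hκ.le) hint

lemma sum_sum_dotProduct_mul_norm_sub_nonpos {m : Type*} [Fintype m] (v : ι → m → ℝ)
    (hv : ∑ t, v t = 0) (x : ι → E) :
    ∑ t, ∑ t', (v t ⬝ᵥ v t') * ‖x t - x t'‖ ≤ 0 := by
  simp_rw [dotProduct, Finset.sum_mul]
  rw [Finset.sum_congr rfl fun t _ => Finset.sum_comm, Finset.sum_comm]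
  refine Finset.sum_nonpos fun i _ => ?_
  exact sum_sum_mul_mul_norm_sub_nonpos x (fun t => v t i)
    (by simpa only [Finset.sum_apply, Pi.zero_apply] using congrFun hv i)

end ConditionallyNegativeDefinite

lemma eq_zero_of_forall_nonneg_mul_sq_add_mul {a b : ℝ} (h : ∀ s, 0 ≤ a * s ^ 2 + b * s) :
    b = 0 := by
  have hmin : IsLocalMin (fun s => a * s ^ 2 + b * s) 0 :=
    Filter.Eventually.of_forall fun s => by simpa using h s
  have hderiv : HasDerivAt (fun s => a * s ^ 2 + b * s) b 0 := by
    simpa using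
      ((hasDerivAt_pow 2 (0 : ℝ)).const_mul a).fun_add ((hasDerivAt_id' (0 : ℝ)).const_mul b)
  exact hmin.hasDerivAt_eq_zero hderiv

section Quadratic

variable {J : Type*} [Fintype J]

/-- The factor `-2` puts the first-order condition in the form of normal equations `Q θ = b`. -/
def quadraticFn (Q : Matrix J J ℝ) (b : J → ℝ) (c : ℝ) (θ : J → ℝ) : ℝ :=
  θ ⬝ᵥ Q *ᵥ θ - 2 * (b ⬝ᵥ θ) + c

variable {Q : Matrix J J ℝ} {b : J → ℝ} {c : ℝ}

lemma quadraticFn_eq_dotProduct_mulVec_add (θ : J → ℝ) :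
    quadraticFn Q b c θ = θ ⬝ᵥ Q *ᵥ θ + ((-2 : ℝ) • b) ⬝ᵥ θ + c := by
  rw [quadraticFn, smul_dotProduct, smul_eq_mul]
  ring

lemma quadraticFn_smul (a : ℝ) (θ : J → ℝ) :
    quadraticFn (a • Q) (a • b) (a * c) θ = a * quadraticFn Q b c θ := by
  simp only [quadraticFn, smul_mulVec, dotProduct_smul, smul_dotProduct, smul_eq_mul]
  ring

lemma quadraticFn_add (hQ : Q.IsSymm) (θ h : J → ℝ) :
    quadraticFn Q b c (θ + h)
      = quadraticFn Q b c θ + h ⬝ᵥ Q *ᵥ h + 2 * ((Q *ᵥ θ - b) ⬝ᵥ h) := by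
  have hsymm : θ ⬝ᵥ Q *ᵥ h = (Q *ᵥ θ) ⬝ᵥ h := by
    rw [dotProduct_mulVec, ← mulVec_transpose, hQ.eq, dotProduct_comm]
  simp only [quadraticFn, mulVec_add, dotProduct_add, add_dotProduct, sub_dotProduct, hsymm,
    dotProduct_comm h (Q *ᵥ θ)]
  ring

lemma quadraticFn_add_smul (hQ : Q.IsSymm) (θ h : J → ℝ) (s : ℝ) :
    quadraticFn Q b c (θ + s • h)
      = quadraticFn Q b c θ + (h ⬝ᵥ Q *ᵥ h) * s ^ 2 + 2 * ((Q *ᵥ θ - b) ⬝ᵥ h) * s := by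
  rw [quadraticFn_add hQ]
  simp only [mulVec_smul, dotProduct_smul, smul_dotProduct, smul_eq_mul]
  ring

omit [Fintype J] in
lemma Matrix.PosSemidef.isSymm (hQ : Q.PosSemidef) : Q.IsSymm :=
  isHermitian_iff_isSymm.1 hQ.isHermitian

lemma Matrix.PosSemidef.dotProduct_mulVec_self_nonneg (hQ : Q.PosSemidef) (v : J → ℝ) :
    0 ≤ v ⬝ᵥ Q *ᵥ v := by
  simpa using hQ.dotProduct_mulVec_nonneg v

lemma quadraticFn_le_of_mulVec_eq (hQ : Q.PosSemidef) {θ₀ : J → ℝ} (h : Q *ᵥ θ₀ = b)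
    (θ : J → ℝ) : quadraticFn Q b c θ₀ ≤ quadraticFn Q b c θ := by
  have := quadraticFn_add (b := b) (c := c) hQ.isSymm θ₀ (θ - θ₀)
  rw [add_sub_cancel, h, sub_self, zero_dotProduct] at this
  linarith [hQ.dotProduct_mulVec_self_nonneg (θ - θ₀)]

lemma mulVec_eq_of_forall_quadraticFn_le (hQ : Q.IsSymm) {θ : J → ℝ}
    (hmin : ∀ θ', quadraticFn Q b c θ ≤ quadraticFn Q b c θ') : Q *ᵥ θ = b := by
  have hgrad : ∀ h, (Q *ᵥ θ - b) ⬝ᵥ h = 0 := fun h => by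
    have := eq_zero_of_forall_nonneg_mul_sq_add_mul (a := h ⬝ᵥ Q *ᵥ h)
      (b := 2 * ((Q *ᵥ θ - b) ⬝ᵥ h)) fun s => by
      have := hmin (θ + s • h)
      rw [quadraticFn_add_smul hQ] at this
      linarith
    linarith
  classical
  funext j
  simpa [sub_eq_zero] using hgrad (Pi.single j 1)

lemma convexOn_quadraticFn (hQ : Q.PosSemidef) : ConvexOn ℝ Set.univ (quadraticFn Q b c) := by
  refine ⟨convex_univ, fun x _ y _ p q hp hq hpq => ?_⟩
  have hQs := hQ.isSymm
  obtain rfl : p = 1 - q := by linarith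
  have hxy : (1 - q) • x + q • y = x + q • (y - x) := by module
  have hy := quadraticFn_add_smul (b := b) (c := c) hQs x (y - x) 1
  rw [one_smul, add_sub_cancel] at hy
  rw [hxy, quadraticFn_add_smul hQs, hy, smul_eq_mul, smul_eq_mul]
  nlinarith [mul_nonneg (mul_nonneg hp hq) (hQ.dotProduct_mulVec_self_nonneg (y - x))]

end Quadratic

section WeightedGram

variable {ι m J : Type*} [Fintype ι] [Fintype m] [Fintype J]
  (d : ι → ι → ℝ) (W : ι → Matrix m J ℝ)

lemma dotProduct_sum_sum_smul_transpose_mul_mulVec (θ : J → ℝ) :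
    θ ⬝ᵥ (∑ t, ∑ t', d t t' • ((W t)ᵀ * W t')) *ᵥ θ
      = ∑ t, ∑ t', ((W t *ᵥ θ) ⬝ᵥ (W t' *ᵥ θ)) * d t t' := by
  simp only [sum_mulVec, dotProduct_sum, smul_mulVec, dotProduct_smul, smul_eq_mul]
  refine Finset.sum_congr rfl fun t _ => Finset.sum_congr rfl fun t' _ => ?_
  rw [← mulVec_mulVec, dotProduct_transpose_mulVec, dotProduct_comm, mul_comm]

lemma sum_sum_smul_transpose_mulVec_dotProduct (u : ι → m → ℝ) (θ : J → ℝ) :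
    (∑ t, ∑ t', d t t' • ((W t)ᵀ *ᵥ u t')) ⬝ᵥ θ
      = ∑ t, ∑ t', ((W t *ᵥ θ) ⬝ᵥ u t') * d t t' := by
  simp only [sum_dotProduct, smul_dotProduct, smul_eq_mul]
  refine Finset.sum_congr rfl fun t _ => Finset.sum_congr rfl fun t' _ => ?_
  rw [dotProduct_comm, dotProduct_transpose_mulVec, dotProduct_comm, mul_comm]

omit [Fintype J] in
lemma isSymm_sum_sum_smul_transpose_mul (hd : ∀ t t', d t' t = d t t') :
    (∑ t, ∑ t', d t t' • ((W t)ᵀ * W t')).IsSymm := by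
  rw [IsSymm, transpose_sum, Finset.sum_comm]
  simp only [transpose_sum, transpose_smul, transpose_mul, transpose_transpose, hd]

lemma sum_sum_dotProduct_sub_mulVec_mul (hd : ∀ t t', d t' t = d t t') (u : ι → m → ℝ)
    (θ : J → ℝ) :
    ∑ t, ∑ t', ((u t - W t *ᵥ θ) ⬝ᵥ (u t' - W t' *ᵥ θ)) * d t t'
      = quadraticFn (∑ t, ∑ t', d t t' • ((W t)ᵀ * W t'))
          (∑ t, ∑ t', d t t' • ((W t)ᵀ *ᵥ u t')) (∑ t, ∑ t', (u t ⬝ᵥ u t') * d t t') θ := by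
  have hswap : ∑ t, ∑ t', (u t ⬝ᵥ (W t' *ᵥ θ)) * d t t'
      = ∑ t, ∑ t', ((W t *ᵥ θ) ⬝ᵥ u t') * d t t' := by
    rw [Finset.sum_comm]
    simp only [dotProduct_comm (u _), hd]
  rw [quadraticFn, dotProduct_sum_sum_smul_transpose_mul_mulVec,
    sum_sum_smul_transpose_mulVec_dotProduct]
  simp only [sub_dotProduct, dotProduct_sub, sub_mul, Finset.sum_sub_distrib]
  rw [hswap]
  ring

lemma posSemidef_neg_sum_sum_norm_sub_smul {E : Type*} [NormedAddCommGroup E]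
    [InnerProductSpace ℝ E] [FiniteDimensional ℝ E] [MeasurableSpace E] [BorelSpace E]
    (x : ι → E) (hW : ∑ t, W t = 0) :
    (-∑ t, ∑ t', ‖x t - x t'‖ • ((W t)ᵀ * W t')).PosSemidef := by
  refine .of_dotProduct_mulVec_nonneg (isHermitian_iff_isSymm.2
    (isSymm_sum_sum_smul_transpose_mul _ W fun t t' => norm_sub_rev _ _).neg) fun θ => ?_
  rw [star_trivial, neg_mulVec, dotProduct_neg, neg_nonneg,
    dotProduct_sum_sum_smul_transpose_mul_mulVec]
  exact sum_sum_dotProduct_mul_norm_sub_nonpos (fun t => W t *ᵥ θ)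
    (by rw [← sum_mulVec, hW, zero_mulVec]) x

end WeightedGram

section Centering

variable {n : ℕ}

noncomputable def centered {M : Type*} [AddCommGroup M] [Module ℝ M] (x : Fin n → M)
    (t : Fin n) : M :=
  x t - (n : ℝ)⁻¹ • ∑ r, x r

lemma sum_centered {M : Type*} [AddCommGroup M] [Module ℝ M] (x : Fin n → M) :
    ∑ t, centered x t = 0 := by
  rcases n.eq_zero_or_pos with rfl | hn
  · simp
  · simp [centered, Finset.sum_sub_distrib, ← Nat.cast_smul_eq_nsmul ℝ, smul_smul, hn.ne']

lemma centered_apply {m : Type*} (x : Fin n → m → ℝ) (t : Fin n) (i : m) :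
    centered x t i = x t i - (n : ℝ)⁻¹ * ∑ r, x r i := by
  simp [centered, Finset.sum_apply]

lemma centered_sub_mulVec {m J : Type*} [Fintype J] (u : Fin n → m → ℝ)
    (W : Fin n → Matrix m J ℝ) (θ : J → ℝ) (t : Fin n) :
    centered (fun r => u r - W r *ᵥ θ) t = centered u t - centered W t *ᵥ θ := by
  simp only [centered, sub_mulVec, smul_mulVec, sum_mulVec, Finset.sum_sub_distrib, smul_sub]
  abel

end Centering

section MultipleLinearModel

variable (k l n : ℕ) (z1 : Fin n → EuclideanSpace ℝ (Fin l))
  (z2 : Fin n → EuclideanSpace ℝ (Fin (k - l)))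

lemma resid_eq_sub_Wmat_mulVec (θ : Fin l × Fin (k - l) → ℝ) (t : Fin n) :
    resid k l n z1 z2 θ t = (z1 t).ofLp - Wmat k l n z2 t *ᵥ θ := by
  ext i
  simp [resid, Wmat, mulVec, dotProduct, Fintype.sum_prod_type, mul_comm]

lemma Xi2_eq_sum_sum_centered : Xi2 k l n z1 z2
    = ∑ t, ∑ t', ‖z2 t - z2 t'‖ • ((Wc k l n z2 t)ᵀ *ᵥ centered (fun r => (z1 r).ofLp) t') := by
  refine Finset.sum_congr rfl fun t _ => Finset.sum_congr rfl fun t' _ => ?_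
  congr 2
  ext i
  rw [centered_apply]

lemma MDDlin_eq_quadraticFn :
    MDDlin k l n z1 z2 = quadraticFn ((-((n : ℝ) ^ 2)⁻¹) • Xi1 k l n z2)
      ((-((n : ℝ) ^ 2)⁻¹) • Xi2 k l n z1 z2)
      (-((n : ℝ) ^ 2)⁻¹ * ∑ t, ∑ t', (centered (fun r => (z1 r).ofLp) t ⬝ᵥ
        centered (fun r => (z1 r).ofLp) t') * ‖z2 t - z2 t'‖) := by
  ext θ
  have hρ : ∀ t i, resid k l n z1 z2 θ t i - (n : ℝ)⁻¹ * ∑ r, resid k l n z1 z2 θ r i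
      = (centered (fun r => (z1 r).ofLp) t - Wc k l n z2 t *ᵥ θ) i := fun t i => by
    rw [Wc, ← centered, ← centered_sub_mulVec, centered_apply]
    simp only [resid_eq_sub_Wmat_mulVec]
  rw [quadraticFn_smul, Xi1, Xi2_eq_sum_sum_centered, ← sum_sum_dotProduct_sub_mulVec_mul _ _
    fun t t' => norm_sub_rev _ _, MDDlin]
  simp only [hρ]
  rfl

lemma posSemidef_neg_Xi1 : (-Xi1 k l n z2).PosSemidef :=
  posSemidef_neg_sum_sum_norm_sub_smul _ z2 (sum_centered _)

end MultipleLinearModel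

/-- Closed-form MDD estimator for the multiple linear model: if `Ξ_{1n}` is invertible then
`θ̂ = Ξ_{1n}^{-1} Ξ_{2n}` minimizes `MDD_n` over `ℝ^{l(k−l)}`; moreover `MDD_n` is a convex
quadratic function of `θ`, and every minimizer satisfies `Ξ_{1n} θ = Ξ_{2n}`. -/
theorem statement19 (k l n : ℕ) (hn : 1 ≤ n)
    (z1 : Fin n → EuclideanSpace ℝ (Fin l))
    (z2 : Fin n → EuclideanSpace ℝ (Fin (k - l))) :
    (IsUnit (Xi1 k l n z2).det →
      ∀ θ : Fin l × Fin (k - l) → ℝ,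
        MDDlin k l n z1 z2 ((Xi1 k l n z2)⁻¹.mulVec (Xi2 k l n z1 z2)) ≤
          MDDlin k l n z1 z2 θ) ∧
    ConvexOn ℝ Set.univ (MDDlin k l n z1 z2) ∧
    (∃ (Q : Matrix (Fin l × Fin (k - l)) (Fin l × Fin (k - l)) ℝ)
        (b : (Fin l × Fin (k - l)) → ℝ) (c : ℝ),
      ∀ θ, MDDlin k l n z1 z2 θ =
        dotProduct θ (Q.mulVec θ) + dotProduct b θ + c) ∧
    (∀ θ : Fin l × Fin (k - l) → ℝ,
      (∀ θ', MDDlin k l n z1 z2 θ ≤ MDDlin k l n z1 z2 θ') →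
        (Xi1 k l n z2).mulVec θ = Xi2 k l n z1 z2) := by
  have hN : 0 < ((n : ℝ) ^ 2)⁻¹ := by
    have : (0 : ℝ) < n := by exact_mod_cast hn
    positivity
  have hQ : ((-((n : ℝ) ^ 2)⁻¹) • Xi1 k l n z2).PosSemidef := by
    rw [neg_smul, ← smul_neg]
    exact (posSemidef_neg_Xi1 k l n z2).smul hN.le
  have hnormal : ∀ θ, ((-((n : ℝ) ^ 2)⁻¹) • Xi1 k l n z2) *ᵥ θ
      = (-((n : ℝ) ^ 2)⁻¹) • Xi2 k l n z1 z2 ↔ Xi1 k l n z2 *ᵥ θ = Xi2 k l n z1 z2 :=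
    fun θ => by rw [smul_mulVec, (smul_right_injective _ (neg_ne_zero.2 hN.ne')).eq_iff]
  rw [MDDlin_eq_quadraticFn]
  refine ⟨fun hdet θ => quadraticFn_le_of_mulVec_eq hQ ((hnormal _).2 ?_) θ,
    convexOn_quadraticFn hQ, ⟨_, _, _, quadraticFn_eq_dotProduct_mulVec_add⟩,
    fun θ hmin => (hnormal θ).1 (mulVec_eq_of_forall_quadraticFn_le hQ.isSymm hmin)⟩
  rw [mulVec_mulVec, mul_nonsing_inv _ hdet, one_mulVec]
end
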